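/- Let x_k in R^N satisfy x_{k+1} = A1 x_k + B u_k for all k >= 0 with (Qperp)^T x_0 = 0, and set z~_k = Q^T x_k. For an integer l >= 1, define the stagewise residual Delta_z(l) = z~_{l+1} - ( A~1 z~_l + B~ u_l + sum over j = 1 to l-1 of ( E_{l-j} z~_j + F_{l-j} u_j ) ). Then Delta_z(l) = E_l z~_0 + F_l u_0. -/
import Mathlib


open Matrix Finset

lemma mulVec_sum' {m n α ι : Type*} [Fintype n] [CommSemiring α]
    (A : Matrix m n α) (s : Finset ι) (f : ι → n → α) :
    A *ᵥ (∑ i ∈ s, f i) = ∑ i ∈ s, A *ᵥ f i := by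
  exact map_sum A.mulVecLin f s

/-- the stagewise state residual equals E_l z~_0 + F_l u_0. -/
theorem stmt_9 (N n p : ℕ) (hN : 0 < N) (hn : 0 < n) (hp : 0 < p) (hnN : n < N)
    (Q : Matrix (Fin N) (Fin n) ℝ) (Qperp : Matrix (Fin N) (Fin (N - n)) ℝ)
    (hQ : Qᵀ * Q = 1) (hQperp : Qperpᵀ * Qperp = 1) (hQQperp : Qᵀ * Qperp = 0)
    (hsum : Q * Qᵀ + Qperp * Qperpᵀ = 1)
    (A1 : Matrix (Fin N) (Fin N) ℝ) (B : Matrix (Fin N) (Fin p) ℝ)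
    (u : ℕ → Fin p → ℝ)
    (At : Matrix (Fin n) (Fin n) ℝ) (Bt : Matrix (Fin n) (Fin p) ℝ)
    (hAt : At = Qᵀ * A1 * Q) (hBt : Bt = Qᵀ * B)
    (E : ℕ → Matrix (Fin n) (Fin n) ℝ) (F : ℕ → Matrix (Fin n) (Fin p) ℝ)
    (hE : ∀ j, 1 ≤ j → E j =
      Qᵀ * A1 * Qperp * ((Qperpᵀ * A1 * Qperp) ^ (j - 1)) * (Qperpᵀ * A1 * Q))
    (hF : ∀ j, 1 ≤ j → F j =
      Qᵀ * A1 * Qperp * ((Qperpᵀ * A1 * Qperp) ^ (j - 1)) * (Qperpᵀ * B))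
    (x : ℕ → Fin N → ℝ)
    (hx : ∀ k, x (k + 1) = A1 *ᵥ x k + B *ᵥ u k)
    (hx0 : Qperpᵀ *ᵥ x 0 = 0)
    (z : ℕ → Fin n → ℝ) (hz : ∀ k, z k = Qᵀ *ᵥ x k) :
    ∀ l, 1 ≤ l →
      z (l + 1) - (At *ᵥ z l + Bt *ᵥ u l
        + ∑ j ∈ Finset.Ico 1 l, (E (l - j) *ᵥ z j + F (l - j) *ᵥ u j))
      = E l *ᵥ z 0 + F l *ᵥ u 0 := by
  set G := Qperpᵀ * A1 * Qperp with hG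
  set C := Qperpᵀ * A1 * Q with hC
  set D := Qperpᵀ * B with hD
  set M := Qᵀ * A1 * Qperp with hM
  set w : ℕ → Fin (N - n) → ℝ := fun k => Qperpᵀ *ᵥ x k with hw
  set v : ℕ → Fin (N - n) → ℝ := fun j => C *ᵥ z j + D *ᵥ u j with hv
  have hxk : ∀ k, x k = Q *ᵥ z k + Qperp *ᵥ w k := by
    intro k
    have h1 : (Q * Qᵀ + Qperp * Qperpᵀ) *ᵥ x k = x k := by
      rw [hsum, Matrix.one_mulVec]
    calc x k = (Q * Qᵀ + Qperp * Qperpᵀ) *ᵥ x k := h1.symm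
    _ = Q *ᵥ z k + Qperp *ᵥ w k := by
        rw [Matrix.add_mulVec, ← Matrix.mulVec_mulVec, ← Matrix.mulVec_mulVec, hz k]
  have hwstep : ∀ k, w (k + 1) = G *ᵥ w k + v k := by
    intro k
    show Qperpᵀ *ᵥ x (k + 1) = _
    rw [hx k, hxk k]
    simp only [Matrix.mulVec_add, Matrix.mulVec_mulVec, hv, hG, hC, hD, Matrix.mul_assoc]
    abel
  have hzstep : ∀ k, z (k + 1) = At *ᵥ z k + Bt *ᵥ u k + M *ᵥ w k := by
    intro k
    rw [hz (k + 1), hx k, hxk k]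
    simp only [Matrix.mulVec_add, Matrix.mulVec_mulVec, hAt, hBt, hM, Matrix.mul_assoc]
    abel
  have hwl : ∀ l, 1 ≤ l → w l = ∑ j ∈ Finset.range l, (G ^ (l - 1 - j)) *ᵥ v j := by
    intro l hl
    induction l, hl using Nat.le_induction with
    | base =>
        have hw0 : w 0 = 0 := hx0
        rw [hwstep 0, hw0]
        simp
    | succ l hl ih =>
        rw [hwstep l, ih, Finset.sum_range_succ, mulVec_sum']
        congr 1
        · refine Finset.sum_congr rfl fun j hj => ?_
          have hjl := Finset.mem_range.mp hj
          have hexp : l + 1 - 1 - j = l - 1 - j + 1 := by omega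
          rw [Matrix.mulVec_mulVec, hexp, pow_succ']
        · simp
  intro l hl
  have hterm : ∀ j ∈ Finset.Ico 1 l,
      E (l - j) *ᵥ z j + F (l - j) *ᵥ u j = M *ᵥ ((G ^ (l - 1 - j)) *ᵥ v j) := by
    intro j hj
    obtain ⟨hj1, hjl⟩ := Finset.mem_Ico.mp hj
    have h1 : 1 ≤ l - j := by omega
    have h2 : l - j - 1 = l - 1 - j := by omega
    rw [hE _ h1, hF _ h1, h2, hv, Matrix.mulVec_mulVec, Matrix.mulVec_add,
      Matrix.mulVec_mulVec, Matrix.mulVec_mulVec, Matrix.mul_assoc, Matrix.mul_assoc]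
  rw [hzstep l, hwl l hl, Finset.range_eq_Ico, Finset.sum_eq_sum_Ico_succ_bot hl,
    Matrix.mulVec_add, mulVec_sum', Finset.sum_congr rfl hterm, hE l hl, hF l hl]
  simp only [Nat.sub_zero, Matrix.mulVec_add, Matrix.mulVec_mulVec, hv, Matrix.mul_assoc]
  abel
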